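/- Let a and b be coprime natural numbers and t a natural number such that t divides a²+1, with gcd(b,t)=1. Let a* be an integer with a·a* ≡ 1 (mod b) and b* an integer with b·b* ≡ 1 (mod a). If b ≡ −a (mod t), then S(t·a*, b) + S(t·b*, a) = (a² + b² + t²)/(t·a·b) + t + 2/t − 6. -/

import Mathlib

/-- The sawtooth function `((x))`: `x - ⌊x⌋ - 1/2` if `x ∉ ℤ`, and `0` if `x ∈ ℤ`. -/
noncomputable def saw (x : ℝ) : ℝ := if Int.fract x = 0 then 0 else x - ⌊x⌋ - 1/2

/-- The classical Dedekind sum `s(a,b) = ∑_{k=1}^b ((k/b)) ((a k / b))`. -/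
noncomputable def dedekindSum (a : ℤ) (b : ℕ) : ℝ :=
  ∑ k ∈ Finset.Icc 1 b, saw ((k : ℝ) / b) * saw ((a : ℝ) * k / b)

/-- The normalized Dedekind sum `S(a,b) = 12 s(a,b)`. -/
noncomputable def S (a : ℤ) (b : ℕ) : ℝ := 12 * dedekindSum a b

open Finset

noncomputable def B2 (x : ℝ) : ℝ := Int.fract x ^ 2 - Int.fract x + 1/6

lemma saw_eq (x : ℝ) : saw x = if Int.fract x = 0 then 0 else Int.fract x - 1/2 := by
  unfold saw Int.fract; norm_num

lemma saw_zero : saw 0 = 0 := by simp [saw_eq]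

lemma saw_intCast (k : ℤ) : saw k = 0 := by simp [saw_eq]

lemma saw_add_int (x : ℝ) (k : ℤ) : saw (x + k) = saw x := by
  rw [saw_eq, saw_eq, Int.fract_add_intCast]

lemma saw_sub_int (x : ℝ) (k : ℤ) : saw (x - k) = saw x := by
  rw [sub_eq_add_neg, ← Int.cast_neg, saw_add_int]

lemma saw_neg (x : ℝ) : saw (-x) = - saw x := by
  rw [saw_eq, saw_eq]
  rcases eq_or_ne (Int.fract x) 0 with h | h
  · rw [Int.fract_neg_eq_zero.mpr h]; simp [h]
  · have hpos : 0 < Int.fract x := lt_of_le_of_ne (Int.fract_nonneg x) (Ne.symm h)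
    have hlt : Int.fract x < 1 := Int.fract_lt_one x
    rw [Int.fract_neg h, if_neg (by linarith), if_neg h]; ring

lemma B2_add_int (x : ℝ) (k : ℤ) : B2 (x + k) = B2 x := by
  unfold B2; rw [Int.fract_add_intCast]

lemma B2_sub_int (x : ℝ) (k : ℤ) : B2 (x - k) = B2 x := by
  rw [sub_eq_add_neg, ← Int.cast_neg, B2_add_int]

lemma saw_sq (x : ℝ) : saw x ^ 2 = B2 x + 1/12 - (if Int.fract x = 0 then 1/4 else 0) := by
  rw [saw_eq]; unfold B2
  split_ifs with h
  · rw [h]; norm_num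
  · ring

lemma sum_id (n : ℕ) : ∑ j ∈ range n, (j : ℝ) = n * (n - 1) / 2 := by
  induction n with
  | zero => simp
  | succ m ih => rw [sum_range_succ, ih]; push_cast; ring

lemma sum_sq (n : ℕ) : ∑ j ∈ range n, (j : ℝ)^2 = n * (n - 1) * (2*n - 1) / 6 := by
  induction n with
  | zero => simp
  | succ m ih => rw [sum_range_succ, ih]; push_cast; ring

lemma saw_pos_lt_one {y : ℝ} (h0 : 0 < y) (h1 : y < 1) : saw y = y - 1/2 := by
  rw [saw_eq, Int.fract_eq_self.mpr ⟨le_of_lt h0, h1⟩, if_neg (by linarith)]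

lemma eval_on_fund {n : ℕ} (hn : 0 < n) (g : ℝ → ℝ)
    (hper : ∀ x : ℝ, g (x + 1/n) = g x)
    (hfund : ∀ y : ℝ, 0 ≤ y → y < 1 → g (y / n) = 0) : ∀ x : ℝ, g x = 0 := by
  intro x
  have hp : Function.Periodic g (1/(n:ℝ)) := hper
  have hM := (hp.int_mul ⌊(n:ℝ)*x⌋) (Int.fract ((n:ℝ)*x) / n)
  have hnR : (n:ℝ) ≠ 0 := Nat.cast_ne_zero.mpr hn.ne'
  have hx : Int.fract ((n:ℝ)*x) / n + ⌊(n:ℝ)*x⌋ * (1/n) = x := by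
    have h : Int.fract ((n:ℝ)*x) = n*x - ⌊(n:ℝ)*x⌋ := rfl
    rw [h]; field_simp; ring
  rw [hx] at hM
  rw [hM, hfund _ (Int.fract_nonneg _) (Int.fract_lt_one _)]

lemma saw_distrib {n : ℕ} (hn : 0 < n) (x : ℝ) :
    ∑ j ∈ range n, saw (x + j/n) = saw (n*x) := by
  have hnR : (0:ℝ) < (n:ℝ) := Nat.cast_pos.mpr hn
  have key := eval_on_fund hn (fun x => (∑ j ∈ range n, saw (x + j/n)) - saw (n*x)) ?_ ?_ x
  · linarith [key]
  · intro x
    have h1 : ∑ j ∈ range n, saw (x + 1/n + j/n) = ∑ j ∈ range n, saw (x + (j+1)/n) := by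
      apply sum_congr rfl; intro j _; congr 1; ring
    have h2 : ∑ j ∈ range (n+1), saw (x + j/n) =
        (∑ j ∈ range n, saw (x + (j+1)/n)) + saw (x + 0/n) := by
      rw [sum_range_succ' (fun j => saw (x + (j:ℝ)/n)) n]
      congr 1
      apply sum_congr rfl; intro j _; congr 2; push_cast; ring
      norm_num
    have h3 : ∑ j ∈ range (n+1), saw (x + j/n) =
        (∑ j ∈ range n, saw (x + j/n)) + saw (x + n/n) :=
      sum_range_succ (fun j => saw (x + (j:ℝ)/n)) n
    have h4 : saw (x + (n:ℝ)/n) = saw (x + 0/n) := by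
      rw [div_self hnR.ne', (by norm_num : x + (0:ℝ)/n = x)]
      exact_mod_cast saw_add_int x 1
    have h5 : saw ((n:ℝ)*(x + 1/n)) = saw ((n:ℝ)*x) := by
      have h : (n:ℝ)*(x+1/n) = n*x + ((1:ℤ):ℝ) := by push_cast; field_simp; all_goals ring
      rw [h, saw_add_int]
    rw [h1, h5]
    have h6 := h2.symm.trans h3
    rw [h4] at h6
    linarith [h6]
  · intro y hy0 hy1
    have hterm : ∀ j ∈ range n, saw (y/n + j/n)
        = ((y+j)/n - 1/2) + (if j = 0 ∧ y = 0 then (1:ℝ)/2 else 0) := by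
      intro j hj
      have hjn : (j:ℝ) + 1 ≤ n := by exact_mod_cast mem_range.mp hj
      have heq : y/n + j/n = (y+j)/n := by ring
      rw [heq]
      rcases eq_or_lt_of_le (by positivity : (0:ℝ) ≤ y + j) with h0 | h0
      · have hy : y = 0 := by nlinarith [Nat.cast_nonneg (α := ℝ) j]
        have hjz : (j:ℝ) = 0 := by linarith
        have hjz' : j = 0 := by exact_mod_cast hjz
        rw [← h0, hy, hjz', if_pos ⟨rfl, rfl⟩]
        simp [saw_zero]
      · have hlt : (y + j)/n < 1 := by rw [div_lt_one hnR]; linarith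
        rw [saw_pos_lt_one (by positivity) hlt, if_neg]
        · ring
        · rintro ⟨h1', h2'⟩; rw [h1', h2'] at h0; norm_num at h0
    rw [sum_congr rfl hterm, sum_add_distrib]
    have hind : (∑ j ∈ range n, if j = 0 ∧ y = 0 then (1:ℝ)/2 else 0)
        = if y = 0 then 1/2 else 0 := by
      rcases eq_or_ne y 0 with hy | hy
      · rw [if_pos hy]
        calc (∑ j ∈ range n, if j = 0 ∧ y = 0 then (1:ℝ)/2 else 0)
            = ∑ j ∈ range n, if j = 0 then (1:ℝ)/2 else 0 := by
              apply sum_congr rfl; intro j _; simp [hy]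
          _ = 1/2 := by
              rw [sum_ite_eq' (range n) 0 (fun _ => (1:ℝ)/2)]
              simp [mem_range, hn]
      · simp [hy]
    rw [hind]
    have hsum : ∑ j ∈ range n, ((y+(j:ℝ))/n - 1/2) = y - 1/2 := by
      rw [sum_sub_distrib, ← sum_div, sum_add_distrib, sum_id, sum_const, sum_const, card_range]
      field_simp
      ring
    rw [hsum]
    have hny : (n:ℝ) * (y/n) = y := by field_simp
    rw [hny]
    rcases eq_or_ne y 0 with hy | hy
    · rw [if_pos hy, hy, saw_zero]; norm_num
    · rw [if_neg hy, saw_pos_lt_one (lt_of_le_of_ne hy0 (Ne.symm hy)) hy1]; ring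

lemma B2_distrib {n : ℕ} (hn : 0 < n) (x : ℝ) :
    ∑ j ∈ range n, B2 (x + j/n) = (1/n) * B2 (n*x) := by
  have hnR : (0:ℝ) < (n:ℝ) := Nat.cast_pos.mpr hn
  have key := eval_on_fund hn (fun x => (∑ j ∈ range n, B2 (x + j/n)) - (1/n) * B2 (n*x)) ?_ ?_ x
  · linarith [key]
  · intro x
    have h1 : ∑ j ∈ range n, B2 (x + 1/n + j/n) = ∑ j ∈ range n, B2 (x + (j+1)/n) := by
      apply sum_congr rfl; intro j _; congr 1; ring
    have h2 : ∑ j ∈ range (n+1), B2 (x + j/n) =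
        (∑ j ∈ range n, B2 (x + (j+1)/n)) + B2 (x + 0/n) := by
      rw [sum_range_succ' (fun j => B2 (x + (j:ℝ)/n)) n]
      congr 1
      apply sum_congr rfl; intro j _; congr 2; push_cast; ring
      norm_num
    have h3 : ∑ j ∈ range (n+1), B2 (x + j/n) =
        (∑ j ∈ range n, B2 (x + j/n)) + B2 (x + n/n) :=
      sum_range_succ (fun j => B2 (x + (j:ℝ)/n)) n
    have h4 : B2 (x + (n:ℝ)/n) = B2 (x + 0/n) := by
      rw [div_self hnR.ne', (by norm_num : x + (0:ℝ)/n = x)]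
      exact_mod_cast B2_add_int x 1
    have h5 : B2 ((n:ℝ)*(x + 1/n)) = B2 ((n:ℝ)*x) := by
      have h : (n:ℝ)*(x+1/n) = n*x + ((1:ℤ):ℝ) := by push_cast; field_simp; all_goals ring
      rw [h, B2_add_int]
    rw [h1, h5]
    have h6 := h2.symm.trans h3
    rw [h4] at h6
    linarith [h6]
  · intro y hy0 hy1
    have hterm : ∀ j ∈ range n, B2 (y/n + j/n) = ((y+j)/n)^2 - (y+j)/n + 1/6 := by
      intro j hj
      have hjn : (j:ℝ) + 1 ≤ n := by exact_mod_cast mem_range.mp hj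
      have heq : y/n + j/n = (y+j)/n := by ring
      have hle : (0:ℝ) ≤ (y+j)/n := by positivity
      have hlt : (y + j)/n < 1 := by rw [div_lt_one hnR]; linarith
      rw [heq]; unfold B2; rw [Int.fract_eq_self.mpr ⟨hle, hlt⟩]
    rw [sum_congr rfl hterm]
    have hny : (n:ℝ) * (y/n) = y := by field_simp
    rw [hny]
    unfold B2
    rw [Int.fract_eq_self.mpr ⟨hy0, hy1⟩]
    have expand : ∀ j ∈ range n, ((y+(j:ℝ))/n)^2 - (y+j)/n + 1/6
        = (y^2 + 2*y*j + (j:ℝ)^2)/n^2 - y/n - (j:ℝ)/n + 1/6 := by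
      intro j _; field_simp; ring
    rw [sum_congr rfl expand]
    simp only [sum_add_distrib, sum_sub_distrib, ← sum_div, sum_add_distrib, ← mul_sum, sum_const, card_range, sum_id, sum_sq, nsmul_eq_mul]
    field_simp
    ring

lemma sum_reflect_per (F : ℝ → ℝ) (hF : ∀ (x : ℝ) (k : ℤ), F (x + k) = F x) {n : ℕ} (hn : 0 < n) (x : ℝ) :
    ∑ j ∈ range n, F (x - j/n) = ∑ j ∈ range n, F (x + j/n) := by
  have hnR : (n:ℝ) ≠ 0 := Nat.cast_ne_zero.mpr hn.ne'
  rw [← sum_range_reflect (fun j => F (x - j/n)) n]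
  have h1 : ∀ j ∈ range n, F (x - ((n - 1 - j : ℕ):ℝ)/n) = F (x + ((j:ℝ)+1)/n) := by
    intro j hj
    have hj' : j ≤ n - 1 := by have := mem_range.mp hj; omega
    have hc : ((n - 1 - j : ℕ):ℝ) = (n:ℝ) - 1 - j := by
      have h1 : 1 + j ≤ n := by omega
      push_cast [Nat.cast_sub hj', Nat.cast_sub (by omega : 1 ≤ n)]
      ring
    have heq : x - ((n:ℝ) - 1 - j)/n = x + ((j:ℝ)+1)/n + ((-1 : ℤ):ℝ) := by
      push_cast; field_simp; ring
    rw [hc, heq, hF]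
  rw [sum_congr rfl h1]
  have h2 : ∑ j ∈ range (n+1), F (x + j/n) =
      (∑ j ∈ range n, F (x + ((j:ℝ)+1)/n)) + F (x + 0/n) := by
    rw [sum_range_succ' (fun j => F (x + (j:ℝ)/n)) n]
    congr 1
    apply sum_congr rfl; intro j _; congr 2; push_cast; ring
    norm_num
  have h3 : ∑ j ∈ range (n+1), F (x + j/n) =
      (∑ j ∈ range n, F (x + j/n)) + F (x + n/n) :=
    sum_range_succ (fun j => F (x + (j:ℝ)/n)) n
  have h4 : F (x + (n:ℝ)/n) = F (x + 0/n) := by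
    rw [div_self hnR, (by norm_num : x + (0:ℝ)/n = x)]
    exact_mod_cast hF x 1
  rw [h4] at h3
  linarith [h2.symm.trans h3]

lemma lemL (x y z : ℝ) (m : ℤ) (h : x + y + z = m) :
    saw x * saw y + saw y * saw z + saw z * saw x
      = -(B2 x + B2 y + B2 z)/2
        + (if Int.fract x = 0 ∧ Int.fract y = 0 ∧ Int.fract z = 0 then 1/4 else 0) := by
  rw [saw_eq, saw_eq, saw_eq]
  unfold B2
  set p := Int.fract x with hp
  set q := Int.fract y with hq
  set r := Int.fract z with hr
  have hps : p = x - ⌊x⌋ := rfl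
  have hqs : q = y - ⌊y⌋ := rfl
  have hrs : r = z - ⌊z⌋ := rfl
  have hsum : p + q + r = ((m - ⌊x⌋ - ⌊y⌋ - ⌊z⌋ : ℤ):ℝ) := by push_cast; rw [hps, hqs, hrs]; linarith
  set K : ℤ := m - ⌊x⌋ - ⌊y⌋ - ⌊z⌋ with hK
  have hp0 : 0 ≤ p := Int.fract_nonneg x
  have hp1 : p < 1 := Int.fract_lt_one x
  have hq0 : 0 ≤ q := Int.fract_nonneg y
  have hq1 : q < 1 := Int.fract_lt_one y
  have hr0 : 0 ≤ r := Int.fract_nonneg z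
  have hr1 : r < 1 := Int.fract_lt_one z
  clear_value p q r
  clear hp hq hr hps hqs hrs h hK
  have noint : ∀ (J : ℤ), 0 < (J:ℝ) → (J:ℝ) < 1 → False := by
    intro J h0 h1
    have b0 : (0:ℤ) < J := by exact_mod_cast h0
    have b1 : J < 1 := by exact_mod_cast h1
    omega
  have oneint : ∀ (J : ℤ), 0 < (J:ℝ) → (J:ℝ) < 2 → (J:ℝ) = 1 := by
    intro J h0 h1
    have b0 : (0:ℤ) < J := by exact_mod_cast h0
    have b1 : J < 2 := by exact_mod_cast h1
    have : J = 1 := by omega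
    rw [this]; norm_num
  have onetwo : ∀ (J : ℤ), 0 < (J:ℝ) → (J:ℝ) < 3 → (J:ℝ) = 1 ∨ (J:ℝ) = 2 := by
    intro J h0 h1
    have b0 : (0:ℤ) < J := by exact_mod_cast h0
    have b1 : J < 3 := by exact_mod_cast h1
    have : J = 1 ∨ J = 2 := by omega
    rcases this with h | h <;> rw [h] <;> norm_num
  by_cases hx : p = 0 <;> by_cases hy : q = 0 <;> by_cases hz : r = 0
  · simp only [hx, hy, hz]; norm_num
  · exfalso
    have hrp : 0 < r := lt_of_le_of_ne hr0 (Ne.symm hz)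
    exact noint K (by rw [hx, hy] at hsum; linarith) (by rw [hx, hy] at hsum; linarith)
  · exfalso
    have hqp : 0 < q := lt_of_le_of_ne hq0 (Ne.symm hy)
    exact noint K (by rw [hx, hz] at hsum; linarith) (by rw [hx, hz] at hsum; linarith)
  · -- p = 0, q,r ≠ 0
    have h1 : (K:ℝ) = 1 := oneint K (by rw [hx] at hsum; nlinarith [lt_of_le_of_ne hq0 (Ne.symm hy), lt_of_le_of_ne hr0 (Ne.symm hz)]) (by rw [hx] at hsum; linarith)
    have hrq : r = 1 - q := by rw [hx] at hsum; rw [h1] at hsum; linarith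
    simp only [hx, if_pos rfl, if_neg hy, if_neg hz, hy, hz, false_and, and_false, if_neg, ite_false]
    norm_num [hrq]; ring
  · exfalso
    have hpp : 0 < p := lt_of_le_of_ne hp0 (Ne.symm hx)
    exact noint K (by rw [hy, hz] at hsum; linarith) (by rw [hy, hz] at hsum; linarith)
  · -- q = 0, p,r ≠ 0
    have h1 : (K:ℝ) = 1 := oneint K (by rw [hy] at hsum; nlinarith [lt_of_le_of_ne hp0 (Ne.symm hx), lt_of_le_of_ne hr0 (Ne.symm hz)]) (by rw [hy] at hsum; linarith)
    have hrq : r = 1 - p := by rw [hy] at hsum; rw [h1] at hsum; linarith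
    simp only [hy, if_pos rfl, if_neg hx, if_neg hz, hx, hz, false_and, and_false, if_neg, ite_false]
    norm_num [hrq]; ring
  · -- r = 0, p,q ≠ 0
    have h1 : (K:ℝ) = 1 := oneint K (by rw [hz] at hsum; nlinarith [lt_of_le_of_ne hp0 (Ne.symm hx), lt_of_le_of_ne hq0 (Ne.symm hy)]) (by rw [hz] at hsum; linarith)
    have hrq : q = 1 - p := by rw [hz] at hsum; rw [h1] at hsum; linarith
    simp only [hz, if_pos rfl, if_neg hx, if_neg hy, hx, hy, false_and, and_false, if_neg, ite_false]
    norm_num [hrq]; ring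
  · -- none zero
    have hK3 := onetwo K (by nlinarith [lt_of_le_of_ne hp0 (Ne.symm hx), lt_of_le_of_ne hq0 (Ne.symm hy), lt_of_le_of_ne hr0 (Ne.symm hz)]) (by linarith)
    have hrv : r = (K:ℝ) - p - q := by linarith
    simp only [if_neg hx, if_neg hy, if_neg hz, hx, false_and, if_neg, ite_false]
    rcases hK3 with h1 | h1 <;> rw [hrv, h1] <;> ring

lemma saw_div_congr {m : ℕ} (hm : 0 < m) {x y : ℤ} (h : x ≡ y [ZMOD (m:ℤ)]) :
    saw ((x:ℝ)/m) = saw ((y:ℝ)/m) := by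
  obtain ⟨k, hk⟩ := h.dvd
  have hmR : (m:ℝ) ≠ 0 := Nat.cast_ne_zero.mpr hm.ne'
  have : (y:ℝ)/m = (x:ℝ)/m + (k:ℤ) := by
    have : (y:ℝ) - x = m * k := by exact_mod_cast congrArg (Int.cast : ℤ → ℝ) hk
    field_simp at this ⊢
    linarith
  rw [this, saw_add_int]

lemma B2_div_congr {m : ℕ} (hm : 0 < m) {x y : ℤ} (h : x ≡ y [ZMOD (m:ℤ)]) :
    B2 ((x:ℝ)/m) = B2 ((y:ℝ)/m) := by
  obtain ⟨k, hk⟩ := h.dvd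
  have hmR : (m:ℝ) ≠ 0 := Nat.cast_ne_zero.mpr hm.ne'
  have : (y:ℝ)/m = (x:ℝ)/m + (k:ℤ) := by
    have : (y:ℝ) - x = m * k := by exact_mod_cast congrArg (Int.cast : ℤ → ℝ) hk
    field_simp at this ⊢
    linarith
  rw [this, B2_add_int]

lemma sum_range_unit {m : ℕ} (u : ℕ) (hm : 0 < m) (hu : Nat.Coprime u m) (f : ℕ → ℝ) :
    ∑ k ∈ range m, f ((u * k) % m) = ∑ k ∈ range m, f k := by
  set u' := u ^ (Nat.totient m - 1) with hu'
  have hphi : 0 < Nat.totient m := Nat.totient_pos.mpr hm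
  have hkey : u * u' ≡ 1 [MOD m] := by
    have : u * u' = u ^ Nat.totient m := by
      rw [hu', ← pow_succ']
      congr 1
      omega
    rw [this]
    exact Nat.ModEq.pow_totient hu
  apply Finset.sum_nbij' (i := fun k => (u * k) % m) (j := fun k => (u' * k) % m)
  · intro a ha; exact mem_range.mpr (Nat.mod_lt _ hm)
  · intro a ha; exact mem_range.mpr (Nat.mod_lt _ hm)
  · intro a ha
    have h1 : u' * (u * a % m) ≡ u' * (u * a) [MOD m] := (Nat.mod_modEq (u*a) m).mul_left u'
    have h2 : u' * (u * a) = (u * u') * a := by ring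
    have h3 : (u * u') * a ≡ 1 * a [MOD m] := hkey.mul_right a
    have : u' * (u * a % m) ≡ a [MOD m] := by
      calc u' * (u * a % m) ≡ u' * (u * a) [MOD m] := h1
        _ = (u * u') * a := h2
        _ ≡ 1 * a [MOD m] := h3
        _ = a := one_mul a
    unfold Nat.ModEq at this
    rw [this, Nat.mod_eq_of_lt (mem_range.mp ha)]
  · intro a ha
    have h1 : u * (u' * a % m) ≡ u * (u' * a) [MOD m] := (Nat.mod_modEq (u'*a) m).mul_left u
    have h2 : u * (u' * a) = (u * u') * a := by ring
    have h3 : (u * u') * a ≡ 1 * a [MOD m] := hkey.mul_right a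
    have : u * (u' * a % m) ≡ a [MOD m] := by
      calc u * (u' * a % m) ≡ u * (u' * a) [MOD m] := h1
        _ = (u * u') * a := h2
        _ ≡ 1 * a [MOD m] := h3
        _ = a := one_mul a
    unfold Nat.ModEq at this
    rw [this, Nat.mod_eq_of_lt (mem_range.mp ha)]
  · intro a ha; rfl

lemma fract_nat_div {k m : ℕ} (h : k < m) : Int.fract ((k:ℝ)/m) = (k:ℝ)/m := by
  have hm : 0 < m := by omega
  apply Int.fract_eq_self.mpr
  constructor
  · positivity
  · rw [div_lt_one (by exact_mod_cast Nat.pos_of_ne_zero (by omega))]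
    exact_mod_cast h

lemma B2_neg (x : ℝ) : B2 (-x) = B2 x := by
  unfold B2
  rcases eq_or_ne (Int.fract x) 0 with h | h
  · rw [Int.fract_neg_eq_zero.mpr h, h]
  · rw [Int.fract_neg h]; ring

lemma saw_distrib_sub {n : ℕ} (hn : 0 < n) (x : ℝ) :
    ∑ j ∈ range n, saw (x - j/n) = saw (n*x) := by
  rw [sum_reflect_per saw saw_add_int hn, saw_distrib hn]

lemma B2_distrib_sub {n : ℕ} (hn : 0 < n) (x : ℝ) :
    ∑ j ∈ range n, B2 (x - j/n) = (1/n) * B2 (n*x) := by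
  rw [sum_reflect_per B2 B2_add_int hn, B2_distrib hn]

noncomputable def DD (p q m : ℕ) : ℝ :=
  ∑ k ∈ range m, saw (((p*k : ℕ) : ℝ)/m) * saw (((q*k : ℕ) : ℝ)/m)

lemma DD_box {p q m : ℕ} (hp : 0 < p) (hq : 0 < q) (hm : 0 < m) :
    DD p q m = ∑ k ∈ range m, ∑ j ∈ range p, ∑ i ∈ range q,
      saw ((k:ℝ)/m - (j:ℝ)/p) * saw ((k:ℝ)/m - (i:ℝ)/q) := by
  unfold DD
  apply sum_congr rfl
  intro k _
  have h1 : saw (((p*k : ℕ) : ℝ)/m) = ∑ j ∈ range p, saw ((k:ℝ)/m - (j:ℝ)/p) := by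
    rw [saw_distrib_sub hp ((k:ℝ)/m)]
    congr 1; push_cast; ring
  have h2 : saw (((q*k : ℕ) : ℝ)/m) = ∑ i ∈ range q, saw ((k:ℝ)/m - (i:ℝ)/q) := by
    rw [saw_distrib_sub hq ((k:ℝ)/m)]
    congr 1; push_cast; ring
  rw [h1, h2, sum_mul_sum]

lemma fract_zero_int {v : ℝ} (h : Int.fract v = 0) : ∃ n : ℤ, v = n := by
  refine ⟨⌊v⌋, ?_⟩
  have : Int.fract v = v - ⌊v⌋ := rfl
  rw [this] at h; linarith

lemma box_zero {a b c : ℕ} (ha : 0 < a) (hb : 0 < b) (hc : 0 < c)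
    (hab : Nat.Coprime a b) {α β γ : ℕ} (hα : α < a) (hβ : β < b) (hγ : γ < c)
    (hZ : Int.fract ((α:ℝ)/a - (β:ℝ)/b) = 0) (hY : Int.fract ((γ:ℝ)/c - (α:ℝ)/a) = 0) :
    α = 0 ∧ β = 0 ∧ γ = 0 := by
  have haR : (a:ℝ) ≠ 0 := Nat.cast_ne_zero.mpr ha.ne'
  have hbR : (b:ℝ) ≠ 0 := Nat.cast_ne_zero.mpr hb.ne'
  have hcR : (c:ℝ) ≠ 0 := Nat.cast_ne_zero.mpr hc.ne'
  obtain ⟨n, hn⟩ := fract_zero_int hZ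
  have hZ' : (α:ℤ)*b - (β:ℤ)*a = n*a*b := by
    have : (α:ℝ)*b - (β:ℝ)*a = (n:ℝ)*a*b := by
      field_simp at hn
      linarith [hn]
    exact_mod_cast this
  have hdvd : (a:ℤ) ∣ (α:ℤ)*b := ⟨n*b + β, by linarith [hZ']⟩
  have hdvd' : a ∣ α * b := by exact_mod_cast hdvd
  have hα0 : α = 0 := by
    exact Nat.eq_zero_of_dvd_of_lt (Nat.Coprime.dvd_of_dvd_mul_right hab hdvd') hα
  have hβ0 : β = 0 := by
    have h1 : (β:ℤ)*a = (-n)*b*a := by rw [hα0] at hZ'; push_cast at hZ'; linarith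
    have h2 : (β:ℤ) = (-n)*b := by
      have := mul_right_cancel₀ (b := (a:ℤ)) (by exact_mod_cast ha.ne') h1
      exact this
    have : (b:ℤ) ∣ (β:ℤ) := ⟨-n, by linarith [h2]⟩
    have hd : b ∣ β := by exact_mod_cast this
    exact Nat.eq_zero_of_dvd_of_lt hd hβ
  refine ⟨hα0, hβ0, ?_⟩
  obtain ⟨m', hm'⟩ := fract_zero_int hY
  rw [hα0] at hm'
  have : (γ:ℝ) = m' * c := by
    push_cast at hm'
    field_simp at hm'
    apply mul_right_cancel₀ haR; linarith [hm']
  have hγc : (γ:ℤ) = m' * c := by exact_mod_cast this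
  have : (c:ℤ) ∣ (γ:ℤ) := ⟨m', by linarith [hγc]⟩
  have hd : c ∣ γ := by exact_mod_cast this
  exact Nat.eq_zero_of_dvd_of_lt hd hγ

lemma pointwise {a b c : ℕ} (ha : 0 < a) (hb : 0 < b) (hc : 0 < c)
    (hab : Nat.Coprime a b) {α β γ : ℕ} (hα : α < a) (hβ : β < b) (hγ : γ < c) :
    saw ((α:ℝ)/a - (β:ℝ)/b) * saw ((α:ℝ)/a - (γ:ℝ)/c)
    + saw ((β:ℝ)/b - (γ:ℝ)/c) * saw ((β:ℝ)/b - (α:ℝ)/a)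
    + saw ((γ:ℝ)/c - (α:ℝ)/a) * saw ((γ:ℝ)/c - (β:ℝ)/b)
    = (B2 ((β:ℝ)/b - (γ:ℝ)/c) + B2 ((γ:ℝ)/c - (α:ℝ)/a) + B2 ((α:ℝ)/a - (β:ℝ)/b))/2
      - (if (α = 0 ∧ β = 0) ∧ γ = 0 then (1/4:ℝ) else 0) := by
  set X := (β:ℝ)/b - (γ:ℝ)/c with hX
  set Y := (γ:ℝ)/c - (α:ℝ)/a with hY
  set Z := (α:ℝ)/a - (β:ℝ)/b with hZ
  have e1 : (α:ℝ)/a - (γ:ℝ)/c = -Y := by rw [hY]; ring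
  have e2 : (β:ℝ)/b - (α:ℝ)/a = -Z := by rw [hZ]; ring
  have e3 : (γ:ℝ)/c - (β:ℝ)/b = -X := by rw [hX]; ring
  rw [e1, e2, e3, saw_neg, saw_neg, saw_neg]
  have hL := lemL X Y Z 0 (by rw [hX, hY, hZ]; push_cast; ring)
  have hind : (if Int.fract X = 0 ∧ Int.fract Y = 0 ∧ Int.fract Z = 0 then (1/4:ℝ) else 0)
      = (if (α = 0 ∧ β = 0) ∧ γ = 0 then (1/4:ℝ) else 0) := by
    rcases Classical.em ((α = 0 ∧ β = 0) ∧ γ = 0) with h | h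
    · obtain ⟨⟨h1, h2⟩, h3⟩ := h
      have fX : Int.fract X = 0 := by rw [hX, h2, h3]; norm_num
      have fY : Int.fract Y = 0 := by rw [hY, h3, h1]; norm_num
      have fZ : Int.fract Z = 0 := by rw [hZ, h1, h2]; norm_num
      rw [if_pos (⟨fX, fY, fZ⟩ : Int.fract X = 0 ∧ Int.fract Y = 0 ∧ Int.fract Z = 0),
        if_pos (⟨⟨h1, h2⟩, h3⟩ : (α = 0 ∧ β = 0) ∧ γ = 0)]
    · rw [if_neg h, if_neg]
      rintro ⟨f1, f2, f3⟩
      exact h ⟨⟨(box_zero ha hb hc hab hα hβ hγ f3 f2).1,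
        (box_zero ha hb hc hab hα hβ hγ f3 f2).2.1⟩,
        (box_zero ha hb hc hab hα hβ hγ f3 f2).2.2⟩
  nlinarith [hL, hind, sq_nonneg (saw X)]

lemma sum_if_zero {n : ℕ} (hn : 0 < n) (P : Prop) [Decidable P] :
    ∑ γ ∈ range n, (if P ∧ γ = 0 then (1/4:ℝ) else 0) = if P then (1/4:ℝ) else 0 := by
  by_cases h : P
  · simp only [h, true_and]
    rw [Finset.sum_ite_eq' (range n) 0 (fun _ => (1/4:ℝ))]
    simp [hn]
  · simp [h]

-- mean value of B2 over k/m
lemma B2_mean {m : ℕ} (hm : 0 < m) : ∑ k ∈ range m, B2 ((k:ℝ)/m) = 1/(6*m) := by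
  have h := B2_distrib hm 0
  have h1 : ∀ k ∈ range m, B2 ((0:ℝ) + (k:ℝ)/m) = B2 ((k:ℝ)/m) := by
    intro k _; congr 1; ring
  rw [sum_congr rfl h1] at h
  rw [h]
  have : B2 ((m:ℝ) * 0) = B2 0 := by norm_num
  rw [this]
  unfold B2
  norm_num

-- sum of B2(u*k/m) for u coprime to m
lemma B2_mean_unit {m : ℕ} (u : ℕ) (hm : 0 < m) (hu : Nat.Coprime u m) :
    ∑ k ∈ range m, B2 (((u*k : ℕ):ℝ)/m) = 1/(6*m) := by
  have key : ∀ k : ℕ, B2 ((((u*k) % m : ℕ):ℝ)/m) = B2 (((u*k : ℕ):ℝ)/m) := by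
    intro k
    have hmod : ((u*k % m : ℕ) : ℤ) ≡ ((u*k : ℕ) : ℤ) [ZMOD (m:ℤ)] := by
      show (((u*k % m : ℕ) : ℤ)) % m = ((u*k : ℕ) : ℤ) % m
      rw [Int.natCast_mod]
      exact Int.emod_emod_of_dvd _ dvd_rfl
    have h2 := B2_div_congr hm hmod
    simpa only [Int.cast_natCast] using h2
  calc ∑ k ∈ range m, B2 (((u*k : ℕ):ℝ)/m)
      = ∑ k ∈ range m, (fun j : ℕ => B2 ((j:ℝ)/m)) ((u*k) % m) := by
        apply sum_congr rfl; intro k _; exact (key k).symm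
    _ = ∑ k ∈ range m, (fun j : ℕ => B2 ((j:ℝ)/m)) k := sum_range_unit u hm hu (fun j : ℕ => B2 ((j:ℝ)/m))
    _ = ∑ k ∈ range m, B2 ((k:ℝ)/m) := rfl
    _ = 1/(6*m) := B2_mean hm


lemma tsum_div (s t u : Finset ℕ) (f : ℕ → ℕ → ℕ → ℝ) (r : ℝ) :
    ∑ x ∈ s, ∑ y ∈ t, ∑ z ∈ u, f x y z / r = (∑ x ∈ s, ∑ y ∈ t, ∑ z ∈ u, f x y z)/r := by
  rw [Finset.sum_div]
  apply Finset.sum_congr rfl; intro x _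
  rw [Finset.sum_div]
  apply Finset.sum_congr rfl; intro y _
  rw [Finset.sum_div]

theorem rademacher {a b c : ℕ} (ha : 0 < a) (hb : 0 < b) (hc : 0 < c)
    (hab : Nat.Coprime a b) (hac : Nat.Coprime a c) (hbc : Nat.Coprime b c) :
    DD b c a + DD c a b + DD a b c
      = ((a:ℝ)^2 + (b:ℝ)^2 + (c:ℝ)^2)/(12*a*b*c) - 1/4 := by
  have haR : (0:ℝ) < a := Nat.cast_pos.mpr ha
  have hbR : (0:ℝ) < b := Nat.cast_pos.mpr hb
  have hcR : (0:ℝ) < c := Nat.cast_pos.mpr hc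
  have e1 : DD b c a = ∑ α ∈ range a, ∑ β ∈ range b, ∑ γ ∈ range c,
      saw ((α:ℝ)/a - (β:ℝ)/b) * saw ((α:ℝ)/a - (γ:ℝ)/c) := DD_box hb hc ha
  have e2 : DD c a b = ∑ α ∈ range a, ∑ β ∈ range b, ∑ γ ∈ range c,
      saw ((β:ℝ)/b - (γ:ℝ)/c) * saw ((β:ℝ)/b - (α:ℝ)/a) := by
    rw [DD_box hc ha hb]
    calc ∑ β ∈ range b, ∑ γ ∈ range c, ∑ α ∈ range a,
          saw ((β:ℝ)/b - (γ:ℝ)/c) * saw ((β:ℝ)/b - (α:ℝ)/a)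
        = ∑ β ∈ range b, ∑ α ∈ range a, ∑ γ ∈ range c,
          saw ((β:ℝ)/b - (γ:ℝ)/c) * saw ((β:ℝ)/b - (α:ℝ)/a) :=
          sum_congr rfl (fun β _ => Finset.sum_comm)
      _ = ∑ α ∈ range a, ∑ β ∈ range b, ∑ γ ∈ range c,
          saw ((β:ℝ)/b - (γ:ℝ)/c) * saw ((β:ℝ)/b - (α:ℝ)/a) := Finset.sum_comm
  have e3 : DD a b c = ∑ α ∈ range a, ∑ β ∈ range b, ∑ γ ∈ range c,
      saw ((γ:ℝ)/c - (α:ℝ)/a) * saw ((γ:ℝ)/c - (β:ℝ)/b) := by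
    rw [DD_box ha hb hc]
    calc ∑ γ ∈ range c, ∑ α ∈ range a, ∑ β ∈ range b,
          saw ((γ:ℝ)/c - (α:ℝ)/a) * saw ((γ:ℝ)/c - (β:ℝ)/b)
        = ∑ α ∈ range a, ∑ γ ∈ range c, ∑ β ∈ range b,
          saw ((γ:ℝ)/c - (α:ℝ)/a) * saw ((γ:ℝ)/c - (β:ℝ)/b) := Finset.sum_comm
      _ = ∑ α ∈ range a, ∑ β ∈ range b, ∑ γ ∈ range c,
          saw ((γ:ℝ)/c - (α:ℝ)/a) * saw ((γ:ℝ)/c - (β:ℝ)/b) :=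
          sum_congr rfl (fun α _ => Finset.sum_comm)
  rw [e1, e2, e3]
  simp only [← sum_add_distrib]
  have congr3 : (∑ α ∈ range a, ∑ β ∈ range b, ∑ γ ∈ range c,
      (saw ((α:ℝ)/a - (β:ℝ)/b) * saw ((α:ℝ)/a - (γ:ℝ)/c)
      + saw ((β:ℝ)/b - (γ:ℝ)/c) * saw ((β:ℝ)/b - (α:ℝ)/a)
      + saw ((γ:ℝ)/c - (α:ℝ)/a) * saw ((γ:ℝ)/c - (β:ℝ)/b)))
      = ∑ α ∈ range a, ∑ β ∈ range b, ∑ γ ∈ range c,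
      ((B2 ((β:ℝ)/b - (γ:ℝ)/c) + B2 ((α:ℝ)/a - (γ:ℝ)/c) + B2 ((α:ℝ)/a - (β:ℝ)/b))/2
        - (if (α = 0 ∧ β = 0) ∧ γ = 0 then (1/4:ℝ) else 0)) := by
    apply sum_congr rfl; intro α hα
    apply sum_congr rfl; intro β hβ
    apply sum_congr rfl; intro γ hγ
    rw [pointwise ha hb hc hab (mem_range.mp hα) (mem_range.mp hβ) (mem_range.mp hγ)]
    have hY : B2 ((γ:ℝ)/c - (α:ℝ)/a) = B2 ((α:ℝ)/a - (γ:ℝ)/c) := by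
      rw [← B2_neg ((α:ℝ)/a - (γ:ℝ)/c), neg_sub]
    rw [hY]
  rw [congr3]
  simp only [sum_sub_distrib]
  rw [tsum_div (range a) (range b) (range c)
    (fun α β γ => B2 ((β:ℝ)/b - (γ:ℝ)/c) + B2 ((α:ℝ)/a - (γ:ℝ)/c) + B2 ((α:ℝ)/a - (β:ℝ)/b)) 2]
  simp only [sum_add_distrib]
  -- now the four pieces
  have hSX : ∑ α ∈ range a, ∑ β ∈ range b, ∑ γ ∈ range c, B2 ((β:ℝ)/b - (γ:ℝ)/c)
      = a * ((1/c) * (1/(6*b))) := by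
    have inner : ∀ β : ℕ, ∑ γ ∈ range c, B2 ((β:ℝ)/b - (γ:ℝ)/c) = (1/(c:ℝ)) * B2 (((c*β : ℕ):ℝ)/b) := by
      intro β
      rw [B2_distrib_sub hc ((β:ℝ)/b)]
      congr 1
      push_cast; field_simp
    have mid : ∑ β ∈ range b, ∑ γ ∈ range c, B2 ((β:ℝ)/b - (γ:ℝ)/c) = (1/(c:ℝ)) * (1/(6*b)) := by
      calc ∑ β ∈ range b, ∑ γ ∈ range c, B2 ((β:ℝ)/b - (γ:ℝ)/c)
          = ∑ β ∈ range b, (1/(c:ℝ)) * B2 (((c*β : ℕ):ℝ)/b) := sum_congr rfl (fun β _ => inner β)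
        _ = (1/(c:ℝ)) * ∑ β ∈ range b, B2 (((c*β : ℕ):ℝ)/b) := by rw [mul_sum]
        _ = (1/(c:ℝ)) * (1/(6*b)) := by rw [B2_mean_unit c hb hbc.symm]
    rw [sum_congr rfl (fun α _ => mid), sum_const, card_range, nsmul_eq_mul]
  have hSY : ∑ α ∈ range a, ∑ β ∈ range b, ∑ γ ∈ range c, B2 ((α:ℝ)/a - (γ:ℝ)/c)
      = (b:ℝ) * ((1/c) * (1/(6*a))) := by
    have inner : ∀ α : ℕ, ∑ γ ∈ range c, B2 ((α:ℝ)/a - (γ:ℝ)/c) = (1/(c:ℝ)) * B2 (((c*α : ℕ):ℝ)/a) := by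
      intro α
      rw [B2_distrib_sub hc ((α:ℝ)/a)]
      congr 1
      push_cast; field_simp
    calc ∑ α ∈ range a, ∑ β ∈ range b, ∑ γ ∈ range c, B2 ((α:ℝ)/a - (γ:ℝ)/c)
        = ∑ α ∈ range a, (b:ℝ) * ((1/(c:ℝ)) * B2 (((c*α : ℕ):ℝ)/a)) := by
          apply sum_congr rfl; intro α _
          rw [sum_congr rfl (fun β (_ : β ∈ range b) => inner α), sum_const, card_range, nsmul_eq_mul]
      _ = (b:ℝ) * ((1/(c:ℝ)) * ∑ α ∈ range a, B2 (((c*α : ℕ):ℝ)/a)) := by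
          rw [← mul_sum, ← mul_sum]
      _ = (b:ℝ) * ((1/c) * (1/(6*a))) := by rw [B2_mean_unit c ha hac.symm]
  have hSZ : ∑ α ∈ range a, ∑ β ∈ range b, ∑ γ ∈ range c, B2 ((α:ℝ)/a - (β:ℝ)/b)
      = (c:ℝ) * ((1/b) * (1/(6*a))) := by
    have inner : ∀ α : ℕ, ∑ β ∈ range b, B2 ((α:ℝ)/a - (β:ℝ)/b) = (1/(b:ℝ)) * B2 (((b*α : ℕ):ℝ)/a) := by
      intro α
      rw [B2_distrib_sub hb ((α:ℝ)/a)]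
      congr 1
      push_cast; field_simp
    calc ∑ α ∈ range a, ∑ β ∈ range b, ∑ γ ∈ range c, B2 ((α:ℝ)/a - (β:ℝ)/b)
        = ∑ α ∈ range a, ∑ β ∈ range b, (c:ℝ) * B2 ((α:ℝ)/a - (β:ℝ)/b) := by
          apply sum_congr rfl; intro α _
          apply sum_congr rfl; intro β _
          rw [sum_const, card_range, nsmul_eq_mul]
      _ = ∑ α ∈ range a, (c:ℝ) * ((1/(b:ℝ)) * B2 (((b*α : ℕ):ℝ)/a)) := by
          apply sum_congr rfl; intro α _
          rw [← mul_sum, inner α]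
      _ = (c:ℝ) * ((1/(b:ℝ)) * ∑ α ∈ range a, B2 (((b*α : ℕ):ℝ)/a)) := by
          rw [← mul_sum, ← mul_sum]
      _ = (c:ℝ) * ((1/b) * (1/(6*a))) := by rw [B2_mean_unit b ha hab.symm]
  have hSI : ∑ α ∈ range a, ∑ β ∈ range b, ∑ γ ∈ range c,
      (if (α = 0 ∧ β = 0) ∧ γ = 0 then (1/4:ℝ) else 0) = 1/4 := by
    have l1 : ∀ α β : ℕ, ∑ γ ∈ range c, (if (α = 0 ∧ β = 0) ∧ γ = 0 then (1/4:ℝ) else 0)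
        = if α = 0 ∧ β = 0 then (1/4:ℝ) else 0 := fun α β => sum_if_zero hc _
    have l2 : ∀ α : ℕ, ∑ β ∈ range b, (if α = 0 ∧ β = 0 then (1/4:ℝ) else 0)
        = if α = 0 then (1/4:ℝ) else 0 := fun α => sum_if_zero hb _
    calc ∑ α ∈ range a, ∑ β ∈ range b, ∑ γ ∈ range c,
          (if (α = 0 ∧ β = 0) ∧ γ = 0 then (1/4:ℝ) else 0)
        = ∑ α ∈ range a, ∑ β ∈ range b, (if α = 0 ∧ β = 0 then (1/4:ℝ) else 0) := by
          apply sum_congr rfl; intro α _; exact sum_congr rfl (fun β _ => l1 α β)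
      _ = ∑ α ∈ range a, (if α = 0 then (1/4:ℝ) else 0) := sum_congr rfl (fun α _ => l2 α)
      _ = 1/4 := by
          rw [Finset.sum_ite_eq' (range a) 0 (fun _ => (1/4:ℝ))]
          simp [ha]
  rw [hSX, hSY, hSZ, hSI]
  field_simp
  ring

lemma nat_mod_zmod (x m : ℕ) : ((x % m : ℕ) : ℤ) ≡ ((x : ℕ) : ℤ) [ZMOD (m:ℤ)] := by
  show (((x % m : ℕ) : ℤ)) % m = ((x : ℕ) : ℤ) % m
  rw [Int.natCast_mod]
  exact Int.emod_emod_of_dvd _ dvd_rfl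

lemma DD_comm (p q m : ℕ) : DD p q m = DD q p m := by
  unfold DD; apply sum_congr rfl; intro k _; ring

lemma Icc_to_range {b : ℕ} (hb : 0 < b) (f : ℕ → ℝ) (h0 : f 0 = 0) (hbz : f b = 0) :
    ∑ k ∈ Finset.Icc 1 b, f k = ∑ k ∈ range b, f k := by
  have hins : range (b+1) = insert 0 (Finset.Icc 1 b) := by
    ext k; simp [Nat.lt_succ_iff]; omega
  have h1 : ∑ k ∈ range (b+1), f k = f 0 + ∑ k ∈ Finset.Icc 1 b, f k := by
    rw [hins, sum_insert (by simp)]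
  have h2 : ∑ k ∈ range (b+1), f k = ∑ k ∈ range b, f k + f b := sum_range_succ f b
  rw [h0] at h1; rw [hbz] at h2
  linarith [h1.symm.trans h2]

lemma dedekind_eq {m : ℕ} (hm : 0 < m) (x : ℤ) (u v : ℕ) (hu : Nat.Coprime u m)
    (hxv : x * u ≡ (v:ℤ) [ZMOD (m:ℤ)]) : dedekindSum x m = DD u v m := by
  have hmR : (m:ℝ) ≠ 0 := Nat.cast_ne_zero.mpr hm.ne'
  unfold dedekindSum
  rw [Icc_to_range hm (fun k => saw ((k : ℝ) / m) * saw ((x : ℝ) * k / m))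
    (by simp [saw_zero]) (by
      have : saw ((m:ℝ)/m) = 0 := by
        rw [div_self hmR]
        exact_mod_cast saw_intCast 1
      simp [this])]
  rw [← sum_range_unit u hm hu (fun k => saw ((k : ℝ) / m) * saw ((x : ℝ) * k / m))]
  unfold DD
  apply sum_congr rfl
  intro k _
  have f1 : saw (((u * k % m : ℕ):ℝ) / m) = saw (((u*k : ℕ):ℝ)/m) := by
    have := saw_div_congr hm (nat_mod_zmod (u*k) m)
    simpa only [Int.cast_natCast] using this
  have f2 : saw ((x:ℝ) * ((u * k % m : ℕ):ℝ) / m) = saw (((v*k : ℕ):ℝ)/m) := by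
    have hcong : (x * (u * k % m : ℕ) : ℤ) ≡ ((v*k : ℕ) : ℤ) [ZMOD (m:ℤ)] := by
      calc (x * ((u * k % m : ℕ):ℤ) : ℤ) ≡ x * ((u*k : ℕ):ℤ) [ZMOD (m:ℤ)] :=
            (nat_mod_zmod (u*k) m).mul_left x
        _ = (x * u) * k := by push_cast; ring
        _ ≡ (v:ℤ) * k [ZMOD (m:ℤ)] := hxv.mul_right (k:ℤ)
        _ = ((v*k : ℕ):ℤ) := by push_cast; ring
    have := saw_div_congr hm hcong
    have hc : ((x * (u * k % m : ℕ) : ℤ):ℝ) = (x:ℝ) * ((u * k % m : ℕ):ℝ) := by rw [Int.cast_mul, Int.cast_natCast]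
    rw [hc] at this
    simpa using this
  rw [f1, f2]

lemma sum_saw_sq {t : ℕ} (ht : 0 < t) :
    ∑ k ∈ range t, saw ((k:ℝ)/t)^2 = 1/(6*t) + t/12 - 1/4 := by
  have h1 : ∀ k ∈ range t, saw ((k:ℝ)/t)^2
      = B2 ((k:ℝ)/t) + 1/12 - (if k = 0 then (1/4:ℝ) else 0) := by
    intro k hk
    rw [saw_sq]
    congr 1
    have hfr : Int.fract ((k:ℝ)/t) = (k:ℝ)/t := fract_nat_div (mem_range.mp hk)
    have : (Int.fract ((k:ℝ)/t) = 0) ↔ (k = 0) := by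
      rw [hfr]
      constructor
      · intro h
        have : (k:ℝ) = 0 := by
          field_simp at h
          exact_mod_cast h
        exact_mod_cast this
      · intro h; rw [h]; norm_num
    simp only [this]
  rw [sum_congr rfl h1]
  simp only [sum_sub_distrib, sum_add_distrib, sum_const, card_range, nsmul_eq_mul]
  rw [B2_mean ht, Finset.sum_ite_eq' (range t) 0 (fun _ => (1/4:ℝ))]
  simp [ht]
  ring

lemma DD_skew {a b t : ℕ} (ht : 0 < t) (hat : Nat.Coprime a t)
    (hbmod : (b : ℤ) ≡ -(a : ℤ) [ZMOD (t : ℤ)]) :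
    DD a b t = -(1/(6*t) + t/12 - 1/4) := by
  unfold DD
  have h1 : ∀ k ∈ range t, saw (((a*k : ℕ):ℝ)/t) * saw (((b*k : ℕ):ℝ)/t)
      = -(saw (((a*k : ℕ):ℝ)/t))^2 := by
    intro k _
    have hcong : ((b*k : ℕ):ℤ) ≡ -(((a*k : ℕ):ℤ)) [ZMOD (t:ℤ)] := by
      calc ((b*k : ℕ):ℤ) = (b:ℤ) * k := by push_cast; ring
        _ ≡ (-(a:ℤ)) * k [ZMOD (t:ℤ)] := hbmod.mul_right _
        _ = -(((a*k : ℕ):ℤ)) := by push_cast; ring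
    have h2 : saw (((b*k : ℕ):ℝ)/t) = - saw (((a*k : ℕ):ℝ)/t) := by
      have h3 := saw_div_congr ht hcong
      have h4 : ((-(((a*k : ℕ):ℤ)) : ℤ):ℝ) = -(((a*k : ℕ):ℝ)) := by push_cast; ring
      rw [h4] at h3
      have h5 : saw (-(((a*k : ℕ):ℝ))/t) = - saw (((a*k : ℕ):ℝ)/t) := by
        rw [neg_div, saw_neg]
      rw [show (((b*k : ℕ):ℝ)) = ((((b*k:ℕ):ℤ)):ℝ) from (Int.cast_natCast _).symm, h3, h5]
    rw [h2]; ring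
  rw [sum_congr rfl h1]
  have h6 : ∀ k ∈ range t, (-(saw (((a*k : ℕ):ℝ)/t))^2 : ℝ)
      = -((fun j : ℕ => saw ((j:ℝ)/t)^2) ((a*k) % t)) := by
    intro k _
    simp only
    congr 2
    have h7 := saw_div_congr ht (nat_mod_zmod (a*k) t)
    rw [show ((a*k : ℕ):ℝ) = (((a*k:ℕ):ℤ):ℝ) from (Int.cast_natCast _).symm,
      show ((a*k % t : ℕ):ℝ) = (((a*k % t :ℕ):ℤ):ℝ) from (Int.cast_natCast _).symm]
    exact h7.symm
  rw [sum_congr rfl h6, sum_neg_distrib,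
    sum_range_unit a ht hat (fun j : ℕ => saw ((j:ℝ)/t)^2), sum_saw_sq ht]

theorem stmt_5 (a b t : ℕ) (ha : 0 < a) (hb : 0 < b) (ht : 0 < t)
    (hab : Nat.Coprime a b) (htdvd : t ∣ a ^ 2 + 1) (hbt : Nat.Coprime b t)
    (astar bstar : ℤ)
    (hastar : (a : ℤ) * astar ≡ 1 [ZMOD (b : ℤ)])
    (hbstar : (b : ℤ) * bstar ≡ 1 [ZMOD (a : ℤ)])
    (hbmod : (b : ℤ) ≡ -(a : ℤ) [ZMOD (t : ℤ)]) :
    S ((t : ℤ) * astar) b + S ((t : ℤ) * bstar) a =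
      ((a : ℝ) ^ 2 + (b : ℝ) ^ 2 + (t : ℝ) ^ 2) / ((t : ℝ) * a * b)
        + (t : ℝ) + 2 / (t : ℝ) - 6 := by
  have hat : Nat.Coprime a t := by
    have h1 : Nat.gcd a t ∣ a^2 := dvd_pow (Nat.gcd_dvd_left a t) two_ne_zero
    have h2 : Nat.gcd a t ∣ a^2 + 1 := (Nat.gcd_dvd_right a t).trans htdvd
    have h3 : Nat.gcd a t ∣ 1 := by
      have := Nat.dvd_sub h2 h1
      simpa using this
    exact Nat.dvd_one.mp h3
  have e1 : dedekindSum ((t : ℤ) * astar) b = DD a t b := by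
    apply dedekind_eq hb _ a t hab
    calc ((t:ℤ) * astar) * a = (t:ℤ) * ((a:ℤ) * astar) := by ring
      _ ≡ (t:ℤ) * 1 [ZMOD (b:ℤ)] := hastar.mul_left _
      _ = (t:ℤ) := by ring
  have e2 : dedekindSum ((t : ℤ) * bstar) a = DD b t a := by
    apply dedekind_eq ha _ b t hab.symm
    calc ((t:ℤ) * bstar) * b = (t:ℤ) * ((b:ℤ) * bstar) := by ring
      _ ≡ (t:ℤ) * 1 [ZMOD (a:ℤ)] := hbstar.mul_left _
      _ = (t:ℤ) := by ring
  have hrad := rademacher hb ha ht hab.symm hbt hat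
  -- DD a t b + DD t b a + DD b a t = (b^2+a^2+t^2)/(12 b a t) - 1/4
  rw [DD_comm t b a, DD_comm b a t] at hrad
  have hskew := DD_skew ht hat hbmod
  rw [hskew] at hrad
  unfold S
  rw [e1, e2]
  have htR : (t:ℝ) ≠ 0 := Nat.cast_ne_zero.mpr ht.ne'
  have haR : (a:ℝ) ≠ 0 := Nat.cast_ne_zero.mpr ha.ne'
  have hbR : (b:ℝ) ≠ 0 := Nat.cast_ne_zero.mpr hb.ne'
  have hDD : DD a t b + DD b t a
      = ((b:ℝ)^2 + (a:ℝ)^2 + (t:ℝ)^2)/(12*b*a*t) - 1/4 + (1/(6*t) + t/12 - 1/4) := by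
    linarith [hrad]
  have hsplit : 12 * DD a t b + 12 * DD b t a = 12 * (DD a t b + DD b t a) := by ring
  rw [hsplit, hDD]
  field_simp
  ring
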